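/- arXiv:2205.02312 — 2 statements merged into one kernel-verified Lean document; each statement's English description precedes it below -/
import Mathlib

section
/- Let H_R and H_I be real symmetric n×n matrices with H_R invertible and H_I positive semi-definite. Then the complex matrix Hess = H_R + i·H_I is invertible (det(Hess) ≠ 0). -/
open Matrix ComplexOrder Complex

namespace Matrix

variable {n : Type*} [Fintype n]

theorem PosSemidef.map_ofReal {A : Matrix n n ℝ} (hA : A.PosSemidef) :
    (A.map ofReal).PosSemidef := by
  classical
  open scoped MatrixOrder in
  obtain ⟨B, rfl⟩ := CStarAlgebra.nonneg_iff_eq_star_mul_self.mp hA.nonneg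
  have hmap : (star B * B).map ofReal = (B.map ofReal)ᴴ * B.map ofReal := by
    rw [star_eq_conjTranspose, ← conjTranspose_map _ fun x ↦ (conj_ofReal x).symm]
    exact Matrix.map_mul (f := ofRealHom)
  exact hmap ▸ posSemidef_conjTranspose_mul_self _

/-- Testing `(A + I • B) *ᵥ v = 0` against `v` gives `a + I b = 0` with `a = v⋆ A v` and
`b = v⋆ B v` both real, so `b = 0`, which for positive semidefinite `B` forces `B *ᵥ v = 0`. -/
theorem mulVec_eq_zero_of_add_I_smul_mulVec_eq_zero {A B : Matrix n n ℂ} (hA : A.IsHermitian)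
    (hB : B.PosSemidef) {v : n → ℂ} (hv : (A + I • B) *ᵥ v = 0) :
    A *ᵥ v = 0 ∧ B *ᵥ v = 0 := by
  have hform : star v ⬝ᵥ A *ᵥ v + I * (star v ⬝ᵥ B *ᵥ v) = 0 := by
    simpa only [add_mulVec, smul_mulVec, dotProduct_add, dotProduct_smul, smul_eq_mul,
      dotProduct_zero] using congrArg (star v ⬝ᵥ ·) hv
  have hA_im : (star v ⬝ᵥ A *ᵥ v).im = 0 := hA.im_star_dotProduct_mulVec_self v
  obtain ⟨-, hB_im⟩ := Complex.nonneg_iff.mp (hB.dotProduct_mulVec_nonneg v)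
  have hB_form : star v ⬝ᵥ B *ᵥ v = 0 := by
    have := congrArg Complex.im hform
    simp only [add_im, mul_im, I_re, I_im, zero_mul, one_mul, zero_add, hA_im, zero_im] at this
    exact Complex.ext this (by simpa using hB_im.symm)
  have hBv : B *ᵥ v = 0 := (hB.dotProduct_mulVec_zero_iff v).mp hB_form
  refine ⟨?_, hBv⟩
  simpa [add_mulVec, smul_mulVec, hBv] using hv

theorem det_add_I_smul_ne_zero [DecidableEq n] {A B : Matrix n n ℂ} (hA : A.IsHermitian)
    (hA_det : A.det ≠ 0) (hB : B.PosSemidef) : (A + I • B).det ≠ 0 := fun h ↦ by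
  obtain ⟨v, hv_ne, hv⟩ := exists_mulVec_eq_zero_iff.mpr h
  exact hA_det <| exists_mulVec_eq_zero_iff.mp
    ⟨v, hv_ne, (mulVec_eq_zero_of_add_I_smul_mulVec_eq_zero hA hB hv).1⟩

end Matrix

theorem det_hess_ne_zero_general (n : ℕ) (HR HI : Matrix (Fin n) (Fin n) ℝ)
    (hHRsymm : HR.IsSymm) (hHRinv : IsUnit HR.det)
    (hHI : HI.PosSemidef) :
    (HR.map (Complex.ofReal) + Complex.I • HI.map (Complex.ofReal)).det ≠ 0 := by
  have hHR_herm : (HR.map ofReal).IsHermitian :=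
    IsHermitian.map (hHRsymm : HR.IsHermitian) ofReal fun x ↦ (conj_ofReal x).symm
  have hHR_det : (HR.map ofReal).det ≠ 0 := by
    convert ofReal_ne_zero.mpr hHRinv.ne_zero using 1
    exact (ofRealHom.map_det HR).symm
  exact det_add_I_smul_ne_zero hHR_herm hHR_det hHI.map_ofReal

/-- If `H_R` is a real symmetric invertible matrix and `H_I` is a real symmetric positive
semi-definite matrix, then `Hess = H_R + i H_I` is invertible: `det Hess ≠ 0`. -/
theorem det_hess_ne_zero (n : ℕ) (HR HI : Matrix (Fin n) (Fin n) ℝ)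
    (hHRsymm : HR.IsSymm) (hHRinv : IsUnit HR.det)
    (hHIsymm : HI.IsSymm) (hHI : HI.PosSemidef) :
    (HR.map (Complex.ofReal) + Complex.I • HI.map (Complex.ofReal)).det ≠ 0 :=
  det_hess_ne_zero_general n HR HI hHRsymm hHRinv hHI
end

section
/- Let P : [t₁, t] → ℝ^d be C¹ in a parameter t₁ with Q(τ, t₁) = ∫_{t₁}^{τ} P(s, t₁) ds type relations, and suppose ∂_{t₁}Q(τ,t₁) = ∫_{t₁}^{τ} ∂_{t₁}P(s,t₁) ds and P(τ,t₁) - P(t,t₁) = ∫_{τ}^{t} g(s,t₁) ds where g(s,t₁) = ∇V₁(Q(s,t₁)). Then ∫_{t₁}^{t} [P(τ,t₁)·∂_{t₁}P(τ,t₁) - g(τ,t₁)·∂_{t₁}Q(τ,t₁)] dτ = P(t,t₁)·∂_{t₁}Q(t,t₁). -/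
/-!
Set `G τ = ⟪P τ, dQ τ⟫`. The two integral relations say that `P` and `dQ` are primitives of `-g`
and `dP`, so `G' = ⟪P, dP⟫ - ⟪g, dQ⟫` is the integrand, and the fundamental theorem of calculus
gives `G t - G t₁ = G t` because `dQ t₁ = 0`.
-/

open intervalIntegral RealInnerProductSpace

open Set

section Primitive

variable {E : Type*} [NormedAddCommGroup E] [NormedSpace ℝ E]
  {a b c : ℝ} {f u : ℝ → E}

theorem hasDerivAt_of_eq_add_integral [CompleteSpace E] (hf : ContinuousOn f (Icc a b)) (hc : c ∈ Icc a b)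
    (hu : ∀ x ∈ Icc a b, u x = u c + ∫ s in c..x, f s) :
    ∀ x ∈ Ioo a b, HasDerivAt u (f x) x := by
  intro x hx
  have hIcc : Icc a b ∈ nhds x := Icc_mem_nhds hx.1 hx.2
  have hint : IntervalIntegrable f MeasureTheory.volume c x :=
    (hf.mono (uIcc_subset_Icc hc (Ioo_subset_Icc_self hx))).intervalIntegrable
  have hprim : HasDerivAt (fun y => u c + ∫ s in c..y, f s) (f x) x :=
    (integral_hasDerivAt_right hint
      ⟨Icc a b, hIcc, hf.aestronglyMeasurable measurableSet_Icc⟩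
      (hf.continuousAt hIcc)).const_add (u c)
  exact hprim.congr_of_eventuallyEq (Filter.eventually_of_mem hIcc hu)

theorem continuousOn_of_eq_add_integral (hab : a ≤ b) (hf : ContinuousOn f (Icc a b))
    (hc : c ∈ Icc a b) (hu : ∀ x ∈ Icc a b, u x = u c + ∫ s in c..x, f s) :
    ContinuousOn u (Icc a b) := by
  rw [← uIcc_of_le hab] at hf hc ⊢
  exact (continuousOn_const.add
    (continuousOn_primitive_interval' hf.intervalIntegrable hc)).congr (by rwa [uIcc_of_le hab])

end Primitive

section InnerProduct

variable {E : Type*} [NormedAddCommGroup E] [InnerProductSpace ℝ E] {a b : ℝ} {u v u' v' : ℝ → E}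

theorem integral_inner_deriv_add_inner_deriv_eq_sub (hab : a ≤ b)
    (hu : ContinuousOn u (Icc a b)) (hv : ContinuousOn v (Icc a b))
    (hu' : ContinuousOn u' (Icc a b)) (hv' : ContinuousOn v' (Icc a b))
    (hdu : ∀ x ∈ Ioo a b, HasDerivAt u (u' x) x) (hdv : ∀ x ∈ Ioo a b, HasDerivAt v (v' x) x) :
    ∫ x in a..b, (⟪u' x, v x⟫ + ⟪u x, v' x⟫) = ⟪u b, v b⟫ - ⟪u a, v a⟫ := by
  have hint : ContinuousOn (fun x => ⟪u' x, v x⟫ + ⟪u x, v' x⟫) (uIcc a b) := by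
    rw [uIcc_of_le hab]
    exact (hu'.inner hv).add (hu.inner hv')
  exact integral_eq_sub_of_hasDerivAt_of_le hab (hu.inner hv)
    (fun x hx => by simpa only [add_comm] using (hdu x hx).inner ℝ (hdv x hx))
    hint.intervalIntegrable

end InnerProduct

theorem boundary_term_identity_general (d : ℕ) (t₁ t : ℝ) (ht : t₁ ≤ t)
    (P dP dQ g : ℝ → EuclideanSpace ℝ (Fin d))
    (hdPcont : ContinuousOn dP (Set.Icc t₁ t))
    (hgcont : ContinuousOn g (Set.Icc t₁ t))
    (hdQ : ∀ τ ∈ Set.Icc t₁ t, dQ τ = ∫ s in t₁..τ, dP s)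
    (hP : ∀ τ ∈ Set.Icc t₁ t, P τ - P t = ∫ s in τ..t, g s) :
    (∫ τ in t₁..t, (⟪P τ, dP τ⟫ - ⟪g τ, dQ τ⟫)) = ⟪P t, dQ t⟫ := by
  have ht₁ : t₁ ∈ Icc t₁ t := left_mem_Icc.2 ht
  have hdQ₀ : dQ t₁ = 0 := by simp [hdQ t₁ ht₁]
  have hngcont : ContinuousOn (fun s => -g s) (Icc t₁ t) := hgcont.neg
  have hPprim : ∀ τ ∈ Icc t₁ t, P τ = P t + ∫ s in t..τ, -g s := fun τ hτ => by
    rw [integral_neg, integral_symm, neg_neg, ← hP τ hτ, add_sub_cancel]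
  have hdQprim : ∀ τ ∈ Icc t₁ t, dQ τ = dQ t₁ + ∫ s in t₁..τ, dP s := fun τ hτ => by
    rw [hdQ₀, zero_add, hdQ τ hτ]
  have hparts := integral_inner_deriv_add_inner_deriv_eq_sub ht
    (continuousOn_of_eq_add_integral ht hngcont (right_mem_Icc.2 ht) hPprim)
    (continuousOn_of_eq_add_integral ht hdPcont ht₁ hdQprim) hngcont hdPcont
    (hasDerivAt_of_eq_add_integral hngcont (right_mem_Icc.2 ht) hPprim)
    (hasDerivAt_of_eq_add_integral hdPcont ht₁ hdQprim)
  rw [hdQ₀, inner_zero_right, sub_zero] at hparts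
  rw [← hparts]
  congr 1 with τ
  rw [inner_neg_left, neg_add_eq_sub]

/-- Along a trajectory after the hop at time `t₁`, if
`∂_{t₁}Q(τ,t₁) = ∫_{t₁}^τ ∂_{t₁}P(s,t₁) ds` and
`P(τ,t₁) - P(t,t₁) = ∫_τ^t g(s,t₁) ds` with `g = ∇V₁(Q(·,t₁))`, then
`∫_{t₁}^t [P(τ)·∂_{t₁}P(τ) - g(τ)·∂_{t₁}Q(τ)] dτ = P(t)·∂_{t₁}Q(t)`. -/
theorem boundary_term_identity (d : ℕ) (t₁ t : ℝ) (ht : t₁ ≤ t)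
    (P dP dQ g : ℝ → EuclideanSpace ℝ (Fin d))
    (hPcont : ContinuousOn P (Set.Icc t₁ t))
    (hdPcont : ContinuousOn dP (Set.Icc t₁ t))
    (hgcont : ContinuousOn g (Set.Icc t₁ t))
    (hdQ : ∀ τ ∈ Set.Icc t₁ t, dQ τ = ∫ s in t₁..τ, dP s)
    (hP : ∀ τ ∈ Set.Icc t₁ t, P τ - P t = ∫ s in τ..t, g s) :
    (∫ τ in t₁..t, (⟪P τ, dP τ⟫ - ⟪g τ, dQ τ⟫)) = ⟪P t, dQ t⟫ :=
  boundary_term_identity_general d t₁ t ht P dP dQ g hdPcont hgcont hdQ hP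
end
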